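/- Let f ∈ L²(ℝ) and let 𝒮f denote the entire extension of its spectrogram to ℂ². Then for all r ≥ 0, sup{|𝒮f(z)| : z ∈ ℂ², |Im z| = r} ≤ ‖𝒮f‖_{L^∞(ℝ²)} · e^{2πr²}. -/

import Mathlib

open Real MeasureTheory

/-- The Gabor transform (short-time Fourier transform with Gaussian window). -/
noncomputable def gabor (f : ℝ → ℂ) (x ω : ℝ) : ℂ :=
  ((2 ^ ((1 : ℝ) / 4) : ℝ) : ℂ) *
    ∫ t : ℝ, f t * Complex.exp (-(π : ℂ) * ((t : ℂ) - (x : ℂ)) ^ 2) *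
      Complex.exp (-2 * (π : ℂ) * Complex.I * (ω : ℂ) * (t : ℂ))

/-- The Bargmann transform. -/
noncomputable def bargmann (f : ℝ → ℂ) (z : ℂ) : ℂ :=
  ((2 ^ ((1 : ℝ) / 4) : ℝ) : ℂ) *
    ∫ t : ℝ, f t * Complex.exp (2 * (π : ℂ) * (t : ℂ) * z - (π : ℂ) * (t : ℂ) ^ 2
      - (π : ℂ) / 2 * z ^ 2)

/-- The entire extension of the spectrogram to `ℂ²`:
`𝒮f(z₁,z₂) = Bf(z₁ − iz₂)(Bf)*(z₁ + iz₂)e^{-π(z₁²+z₂²)}`. -/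
noncomputable def spectrogramExt (f : ℝ → ℂ) (z : ℂ × ℂ) : ℂ :=
  bargmann f (z.1 - Complex.I * z.2) *
    (starRingEnd ℂ) (bargmann f ((starRingEnd ℂ) (z.1 + Complex.I * z.2))) *
    Complex.exp (-(π : ℂ) * (z.1 ^ 2 + z.2 ^ 2))

/-!
Put `w₁ = z₁ − iz₂` and `w₂ = z₁ + iz₂`. On `w = x − iω` the Bargmann transform is the Gabor
transform `𝒢f(x, ω)` times a factor of modulus `e^{(π/2)|w|²}`, so
`|𝒮f(z)| = |𝒢f(w₁)| |𝒢f(w₂)| e^{(π/2)(|w₁|² + |w₂|²) − π Re(z₁² + z₂²)}`.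
By the parallelogram law `|w₁|² + |w₂|² = 2|z₁|² + 2|z₂|²`, and `|ζ|² − Re ζ² = 2 (Im ζ)²`, so the
exponent is `2π|Im z|²`, while `|𝒢f(w₁)| |𝒢f(w₂)| ≤ ‖𝒢f‖²_∞`, finite for `f ∈ L²` by
Cauchy–Schwarz.
-/

open Complex in
lemma bargmann_ofReal_sub_I_mul (f : ℝ → ℂ) (x ω : ℝ) :
    bargmann f (x - I * ω) =
      Complex.exp (π * x ^ 2 - π / 2 * (x - I * ω) ^ 2) * gabor f x ω := by
  have integrand_eq : ∀ t : ℝ,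
      f t * Complex.exp (2 * π * t * (x - I * ω) - π * t ^ 2 - π / 2 * (x - I * ω) ^ 2) =
        Complex.exp (π * x ^ 2 - π / 2 * (x - I * ω) ^ 2) *
          (f t * Complex.exp (-π * (t - x) ^ 2) * Complex.exp (-2 * π * I * ω * t)) := by
    intro t
    rw [show 2 * π * t * (x - I * ω) - π * t ^ 2 - π / 2 * (x - I * ω) ^ 2 =
        (π * x ^ 2 - π / 2 * (x - I * ω) ^ 2) + -π * (t - x) ^ 2 + -2 * π * I * ω * t by ring,
      Complex.exp_add, Complex.exp_add]
    ring
  simp_rw [bargmann, gabor, integrand_eq, integral_const_mul]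
  ring

lemma norm_bargmann (f : ℝ → ℂ) (w : ℂ) :
    ‖bargmann f w‖ = ‖gabor f w.re (-w.im)‖ * Real.exp (π / 2 * ‖w‖ ^ 2) := by
  have hw : w = (w.re : ℂ) - Complex.I * ((-w.im : ℝ) : ℂ) := by
    simp [Complex.ext_iff]
  rw [hw, bargmann_ofReal_sub_I_mul, norm_mul, Complex.norm_exp, ← hw, mul_comm,
    Complex.sq_norm, Complex.normSq_apply]
  congr 2
  simp only [Complex.sub_re, Complex.mul_re, Complex.ofReal_re, Complex.ofReal_im, pow_two]
  norm_num
  ring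

lemma memLp_two_exp_neg_mul_sq_sub {a : ℝ} (ha : 0 < a) (x : ℝ) :
    MemLp (fun t : ℝ => Real.exp (-a * (t - x) ^ 2)) 2 volume := by
  refine (memLp_two_iff_integrable_sq (by fun_prop)).2 ?_
  refine ((integrable_exp_neg_mul_sq (by positivity : 0 < 2 * a)).comp_sub_right x).congr
    (ae_of_all _ fun t => ?_)
  simp only [← Real.exp_nat_mul]
  ring_nf

lemma norm_gabor_integrand (f : ℝ → ℂ) (x ω t : ℝ) :
    ‖f t * Complex.exp (-(π : ℂ) * ((t : ℂ) - (x : ℂ)) ^ 2) *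
        Complex.exp (-2 * (π : ℂ) * Complex.I * (ω : ℂ) * (t : ℂ))‖ =
      ‖f t‖ * Real.exp (-π * (t - x) ^ 2) := by
  rw [norm_mul, norm_mul, Complex.norm_exp, Complex.norm_exp]
  norm_cast
  simp [Complex.mul_re, Complex.mul_im]

lemma norm_gabor_le {f : ℝ → ℂ} (hf : MemLp f 2 volume) (x ω : ℝ) :
    ‖gabor f x ω‖ ≤ 2 ^ ((1 : ℝ) / 4) * ((∫ t, ‖f t‖ ^ (2 : ℝ)) ^ ((1 : ℝ) / 2) *
      (∫ t, Real.exp (-π * t ^ 2) ^ (2 : ℝ)) ^ ((1 : ℝ) / 2)) := by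
  have cauchy_schwarz := integral_mul_le_Lp_mul_Lq_of_nonneg Real.HolderConjugate.two_two
    (ae_of_all _ fun t => norm_nonneg (f t)) (ae_of_all _ fun t => (Real.exp_pos _).le)
    (by rw [ENNReal.ofReal_ofNat]; exact hf.norm)
    (by rw [ENNReal.ofReal_ofNat]; exact memLp_two_exp_neg_mul_sq_sub Real.pi_pos x)
  rw [integral_sub_right_eq_self (fun t => Real.exp (-π * t ^ 2) ^ (2 : ℝ)) x] at cauchy_schwarz
  rw [gabor, norm_mul, Complex.norm_real, Real.norm_of_nonneg (by positivity)]
  gcongr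
  refine (norm_integral_le_integral_norm _).trans_eq ?_ |>.trans cauchy_schwarz
  simp_rw [norm_gabor_integrand]

lemma bddAbove_range_norm_gabor_sq {f : ℝ → ℂ} (hf : MemLp f 2 volume) :
    BddAbove (Set.range fun p : ℝ × ℝ => ‖gabor f p.1 p.2‖ ^ 2) :=
  ⟨_, Set.forall_mem_range.2 fun p =>
    pow_le_pow_left₀ (norm_nonneg _) (norm_gabor_le hf p.1 p.2) 2⟩

lemma norm_sub_I_mul_sq_add_norm_add_I_mul_sq (z₁ z₂ : ℂ) :
    ‖z₁ - Complex.I * z₂‖ ^ 2 + ‖z₁ + Complex.I * z₂‖ ^ 2 = 2 * (‖z₁‖ ^ 2 + ‖z₂‖ ^ 2) := by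
  rw [add_comm, parallelogram_law_with_norm ℝ, norm_mul, Complex.norm_I, one_mul]

lemma sq_norm_sub_re_sq (z : ℂ) : ‖z‖ ^ 2 - (z ^ 2).re = 2 * z.im ^ 2 := by
  rw [Complex.sq_norm, Complex.normSq_apply, sq, Complex.mul_re]
  ring

lemma norm_spectrogramExt_le (f : ℝ → ℂ) {M : ℝ} (hM : ∀ x ω, ‖gabor f x ω‖ ^ 2 ≤ M)
    (z : ℂ × ℂ) :
    ‖spectrogramExt f z‖ ≤ M * Real.exp (2 * π * (z.1.im ^ 2 + z.2.im ^ 2)) := by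
  set w₁ := z.1 - Complex.I * z.2
  set w₂ := (starRingEnd ℂ) (z.1 + Complex.I * z.2)
  have exponent_eq : π / 2 * ‖w₁‖ ^ 2 + π / 2 * ‖w₂‖ ^ 2 +
      (-(π : ℂ) * (z.1 ^ 2 + z.2 ^ 2)).re = 2 * π * (z.1.im ^ 2 + z.2.im ^ 2) := by
    have hre : (-(π : ℂ) * (z.1 ^ 2 + z.2 ^ 2)).re = -π * ((z.1 ^ 2).re + (z.2 ^ 2).re) := by
      simp
    have parallelogram := norm_sub_I_mul_sq_add_norm_add_I_mul_sq z.1 z.2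
    have h₁ := sq_norm_sub_re_sq z.1
    have h₂ := sq_norm_sub_re_sq z.2
    rw [Complex.norm_conj, hre]
    linear_combination π / 2 * parallelogram + π * h₁ + π * h₂
  calc ‖spectrogramExt f z‖
      = ‖gabor f w₁.re (-w₁.im)‖ * ‖gabor f w₂.re (-w₂.im)‖ * Real.exp
          (π / 2 * ‖w₁‖ ^ 2 + π / 2 * ‖w₂‖ ^ 2 + (-(π : ℂ) * (z.1 ^ 2 + z.2 ^ 2)).re) := by
        rw [spectrogramExt, norm_mul, norm_mul, RCLike.norm_conj, norm_bargmann, norm_bargmann,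
          Complex.norm_exp, Real.exp_add, Real.exp_add]
        ring
    _ ≤ M * Real.exp (2 * π * (z.1.im ^ 2 + z.2.im ^ 2)) := by
        rw [exponent_eq]
        gcongr
        linarith [hM w₁.re (-w₁.im), hM w₂.re (-w₂.im),
          two_mul_le_add_sq ‖gabor f w₁.re (-w₁.im)‖ ‖gabor f w₂.re (-w₂.im)‖]

theorem spectrogramExt_growth_bound_general (f : ℝ → ℂ) (hf : MemLp f 2 volume)
    (r : ℝ) (z : ℂ × ℂ)
    (hz : Real.sqrt (z.1.im ^ 2 + z.2.im ^ 2) = r) :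
    ‖spectrogramExt f z‖ ≤
      (⨆ p : ℝ × ℝ, ‖gabor f p.1 p.2‖ ^ 2) * Real.exp (2 * π * r ^ 2) := by
  rw [← hz, Real.sq_sqrt (by positivity)]
  exact norm_spectrogramExt_le f (fun x ω => le_ciSup (bddAbove_range_norm_gabor_sq hf) (x, ω)) z

/-- Growth bound for the entire extension of the spectrogram: for all `r ≥ 0`,
`sup {|𝒮f(z)| : |Im z| = r} ≤ ‖𝒮f‖_{L^∞(ℝ²)} · e^{2πr²}`,
where on `ℝ²`, `𝒮f = |𝒢f|²`. -/
theorem spectrogramExt_growth_bound (f : ℝ → ℂ) (hf : MemLp f 2 volume)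
    (r : ℝ) (hr : 0 ≤ r) (z : ℂ × ℂ)
    (hz : Real.sqrt (z.1.im ^ 2 + z.2.im ^ 2) = r) :
    ‖spectrogramExt f z‖ ≤
      (⨆ p : ℝ × ℝ, ‖gabor f p.1 p.2‖ ^ 2) * Real.exp (2 * π * r ^ 2) :=
  spectrogramExt_growth_bound_general f hf r z hz
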